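/- Let X be a perturbable compact metric space and f : X → X continuous, and suppose that for every ε > 0 there exists δ > 0 such that for every continuous function g : X → X with ρ(g,f) < δ, every g-orbit is ε-shadowed by an f-orbit. If p ∈ X is an isolated point, then for every δ' > 0 there exists γ_p > 0 such that every γ_p-pseudo-orbit (x_i)_{i∈ℕ} for f satisfies one of: (1) p occurs at most once in (x_i); or (2) p is a periodic point of f, there exists M ∈ ℕ with x_M in the f-orbit of p, and for every such M, sup_{i∈ℕ} d(x_{M+i}, f^i(x_M)) < δ'. -/
import Mathlib


open scoped ENNReal

/-- supremum distance `ρ(f,g) = sup_x d(f x, g x)` between self-maps. -/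
noncomputable def rho {X : Type*} [PseudoMetricSpace X] (f g : X → X) : ℝ≥0∞ :=
  ⨆ x, edist (f x) (g x)

/-- supremum distance between sequences of self-maps. -/
noncomputable def rhoSeq {X : Type*} [PseudoMetricSpace X] (f g : ℕ → X → X) : ℝ≥0∞ :=
  ⨆ i, rho (f i) (g i)

/-- `seqComp f i = f_{i-1} ∘ ⋯ ∘ f_0`, with `seqComp f 0 = id`. -/
def seqComp {X : Type*} (f : ℕ → X → X) : ℕ → X → X
  | 0 => id
  | n + 1 => f n ∘ seqComp f n

/-- A metric space is perturbable. -/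
def Perturbable (X : Type*) [MetricSpace X] : Prop :=
  ∀ ε > (0 : ℝ), ∃ δ > (0 : ℝ), ∀ f : X → X, Continuous f →
    ∀ F : Finset X, ∀ g₀ : X → X, (∀ x ∈ F, dist (g₀ x) (f x) < δ) →
      ∃ g : X → X, Continuous g ∧ rho f g < ENNReal.ofReal ε ∧ ∀ x ∈ F, g x = g₀ x

lemma rho_comm {X : Type*} [PseudoMetricSpace X] (f g : X → X) : rho f g = rho g f := by
  simp [rho, edist_comm]

/-- iterate a choice of "next smaller constant". -/
lemma exists_chain {Q : ℝ → ℝ → Prop} (h : ∀ b : ℝ, 0 < b → ∃ c, 0 < c ∧ Q b c)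
    (b0 : ℝ) (hb0 : 0 < b0) :
    ∃ E : ℕ → ℝ, E 0 = b0 ∧ (∀ j, 0 < E j) ∧ ∀ j, Q (E j) (E (j + 1)) := by
  choose c hc hQ using h
  let E : ℕ → {x : ℝ // 0 < x} := fun n =>
    Nat.rec ⟨b0, hb0⟩ (fun _ prev => ⟨c prev.1 prev.2, hc _ _⟩) n
  exact ⟨fun n => (E n).1, rfl, fun j => (E j).2, fun j => hQ _ _⟩

/-- From any finite pseudo-orbit loop at `p` one can extract a simple one. -/
lemma loop_extract {X : Type*} [MetricSpace X] (f : X → X) (γ : ℝ) (p : X) :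
    ∀ n : ℕ, 1 ≤ n → ∀ s : ℕ → X, s 0 = p → s n = p →
      (∀ t, t < n → dist (f (s t)) (s (t + 1)) < γ) →
      ∃ m : ℕ, 1 ≤ m ∧ ∃ z : ℕ → X, z 0 = p ∧ z m = p ∧
        (∀ t, t < m → dist (f (z t)) (z (t + 1)) < γ) ∧
        (∀ t1 t2, t1 < t2 → t2 < m → z t1 ≠ z t2) := by
  intro n
  induction n using Nat.strong_induction_on with
  | _ n ih =>
    intro hn s hs0 hsn hgap
    by_cases hinj : ∀ t1 t2, t1 < t2 → t2 < n → s t1 ≠ s t2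
    · exact ⟨n, hn, s, hs0, hsn, hgap, hinj⟩
    · push_neg at hinj
      obtain ⟨t1, t2, hlt, ht2, heq⟩ := hinj
      set d := t2 - t1 with hd
      set n' := n - d with hn'
      have hd1 : 1 ≤ d := by omega
      have hn'1 : 1 ≤ n' := by omega
      have hn'lt : n' < n := by omega
      have hn't1 : t1 < n' := by omega
      refine ih n' hn'lt hn'1 (fun t => if t ≤ t1 then s t else s (t + d)) ?_ ?_ ?_
      · simpa using hs0
      · have : ¬ (n' ≤ t1) := by omega
        simp only [if_neg (by omega : ¬ n' ≤ t1)]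
        have : n' + d = n := by omega
        rw [this, hsn]
      · intro t ht
        rcases lt_trichotomy t t1 with hc | hc | hc
        · simp only [if_pos (le_of_lt hc), if_pos (by omega : t + 1 ≤ t1)]
          exact hgap t (by omega)
        · subst hc
          simp only [if_pos (le_refl t), if_neg (by omega : ¬ t + 1 ≤ t)]
          have h1 : t + 1 + d = t2 + 1 := by omega
          rw [h1, heq]
          exact hgap t2 (by omega)
        · simp only [if_neg (by omega : ¬ t ≤ t1), if_neg (by omega : ¬ t + 1 ≤ t1)]
          have : t + 1 + d = t + d + 1 := by omega
          rw [this]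
          exact hgap (t + d) (by omega)

theorem stmt12 {X : Type*} [MetricSpace X] [CompactSpace X] (hX : Perturbable X)
    (f : X → X) (hf : Continuous f)
    (h : ∀ ε > (0 : ℝ), ∃ δ > (0 : ℝ), ∀ g : X → X, Continuous g →
      rho g f < ENNReal.ofReal δ →
      ∀ x : X, ∃ z : X, ∀ i : ℕ, dist (g^[i] x) (f^[i] z) < ε)
    (p : X) (hp : IsOpen ({p} : Set X)) :
    ∀ δ' > (0 : ℝ), ∃ γp > (0 : ℝ), ∀ x : ℕ → X,
      (∀ i : ℕ, dist (f (x i)) (x (i + 1)) < γp) →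
      ((∀ i j : ℕ, x i = p → x j = p → i = j) ∨
        ((∃ P : ℕ, 1 ≤ P ∧ f^[P] p = p) ∧
          (∃ M : ℕ, ∃ k : ℕ, f^[k] p = x M) ∧
          (∀ M : ℕ, (∃ k : ℕ, f^[k] p = x M) →
            (⨆ i : ℕ, edist (x (M + i)) (f^[i] (x M))) < ENNReal.ofReal δ'))) := by
  intro δ' hδ'
  -- isolation radius
  obtain ⟨r, hr, hball⟩ := Metric.isOpen_iff.mp hp p rfl
  have hisol : ∀ q : X, dist q p < r → q = p := by
    intro q hq
    have : q ∈ Metric.ball p r := by simpa [Metric.mem_ball] using hq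
    simpa using hball this
  by_cases hper : ∃ P : ℕ, 1 ≤ P ∧ f^[P] p = p
  · -- Case A : p periodic, use uniform continuity to get stability of the orbit
    obtain ⟨P, hP1, hPp⟩ := hper
    have huc := Metric.uniformContinuous_iff.mp (CompactSpace.uniformContinuous_of_continuous hf)
    have hmod : ∀ b : ℝ, 0 < b → ∃ c, 0 < c ∧
        (c ≤ b / 2 ∧ ∀ a a' : X, dist a a' < c → dist (f a) (f a') < b / 2) := by
      intro b hb
      obtain ⟨β, hβ, hβ'⟩ := huc (b / 2) (by linarith)
      refine ⟨min β (b / 2), by positivity, min_le_right _ _, ?_⟩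
      intro a a' haa
      exact hβ' (lt_of_lt_of_le haa (min_le_left _ _))
    obtain ⟨E, hE0, hEpos, hEstep⟩ := exists_chain hmod (min r δ' / 2) (by positivity)
    have hEhalf : ∀ j, E (j + 1) ≤ E j / 2 := fun j => (hEstep j).1
    have hEmod : ∀ j, ∀ a a' : X, dist a a' < E (j + 1) → dist (f a) (f a') < E j / 2 :=
      fun j => (hEstep j).2
    have hEmono : ∀ j k, j ≤ k → E k ≤ E j := by
      intro j k hjk
      induction k with
      | zero => simp_all
      | succ k ihk =>
        rcases Nat.eq_or_lt_of_le hjk with hc | hc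
        · simp [hc]
        · have h1 := ihk (by omega)
          have h2 := hEhalf k
          have := hEpos k
          linarith
    have hE0r : E 0 ≤ min r δ' / 2 := le_of_eq hE0
    -- reduction of iterates mod P
    have hmul : ∀ q : ℕ, f^[P * q] p = p := by
      intro q
      induction q with
      | zero => simp
      | succ q ihq =>
        have : P * (q + 1) = P * q + P := by ring
        rw [this, Function.iterate_add_apply, hPp, ihq]
    have horb : ∀ k : ℕ, f^[k] p = f^[k % P] p := by
      intro k
      conv_lhs => rw [← Nat.mod_add_div k P]
      rw [Function.iterate_add_apply, hmul]
    refine ⟨E P, hEpos P, ?_⟩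
    intro x hx
    by_cases hM : ∃ M k : ℕ, f^[k] p = x M
    · right
      refine ⟨⟨P, hP1, hPp⟩, hM, ?_⟩
      -- stability: one block
      have inner : ∀ M, ∀ t, t ≤ P → dist (x (M + t)) (f^[t] (x M)) < E (P - t) := by
        intro M t
        induction t with
        | zero => simpa using hEpos P
        | succ t iht =>
          intro ht
          have h1 := iht (by omega)
          have hPt : P - t = (P - (t + 1)) + 1 := by omega
          have h2 : dist (f (x (M + t))) (f (f^[t] (x M))) < E (P - (t + 1)) / 2 := by
            apply hEmod (P - (t + 1))
            rw [← hPt]; exact h1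
          have h3 : dist (f (x (M + t))) (x (M + t + 1)) < E P := hx (M + t)
          have h4 : E P ≤ E (P - (t + 1)) / 2 := by
            calc E P ≤ E (P - t) := hEmono _ _ (by omega)
            _ ≤ E (P - (t + 1)) / 2 := by rw [hPt]; exact hEhalf _
          have h5 : M + (t + 1) = M + t + 1 := by omega
          rw [h5, Function.iterate_succ_apply']
          calc dist (x (M + t + 1)) (f (f^[t] (x M)))
              ≤ dist (x (M + t + 1)) (f (x (M + t))) + dist (f (x (M + t))) (f (f^[t] (x M))) :=
                dist_triangle _ _ _
            _ < E (P - (t + 1)) / 2 + E (P - (t + 1)) / 2 := by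
                rw [dist_comm (x (M + t + 1))]; linarith
            _ = E (P - (t + 1)) := by ring
      have outer : ∀ i M k, k < P → x M = f^[k] p → dist (x (M + i)) (f^[i] (x M)) < E 0 := by
        intro i
        induction i using Nat.strong_induction_on with
        | _ i ihi =>
          intro M k hk hxM
          set T := P - k with hT
          have hT1 : 1 ≤ T := by omega
          by_cases hi : i ≤ T
          · exact lt_of_lt_of_le (inner M i (by omega)) (hEmono 0 (P - i) (by omega))
          · push_neg at hi
            have hxT : x (M + T) = p := by
              have h1 := inner M T (by omega)
              have h2 : f^[T] (x M) = p := by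
                rw [hxM, ← Function.iterate_add_apply]
                have : T + k = P := by omega
                rw [this, hPp]
              rw [h2] at h1
              apply hisol
              calc dist (x (M + T)) p < E (P - T) := h1
                _ ≤ E 0 := hEmono 0 _ (by omega)
                _ ≤ min r δ' / 2 := hE0r
                _ < r := by
                    have := min_le_left r δ'
                    linarith
            have hrec := ihi (i - T) (by omega) (M + T) 0 (by omega) (by simpa using hxT)
            have e1 : M + T + (i - T) = M + i := by omega
            have e2 : f^[i - T] (x (M + T)) = f^[i] (x M) := by
              rw [hxT, hxM, ← Function.iterate_add_apply]
              have h9 : i + k = (i - T) + P := by omega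
              rw [h9, Function.iterate_add_apply, hPp]
            rw [e1, e2] at hrec
            exact hrec
      intro M hMk
      obtain ⟨k, hk⟩ := hMk
      have hk' : x M = f^[k % P] p := by rw [← hk, horb]
      have hout := fun i => outer i M (k % P) (Nat.mod_lt _ (by omega)) hk'
      have hsup : (⨆ i : ℕ, edist (x (M + i)) (f^[i] (x M))) ≤ ENNReal.ofReal (min r δ' / 2) := by
        apply iSup_le
        intro i
        rw [edist_dist]
        apply ENNReal.ofReal_le_ofReal
        have := hout i
        linarith [hE0r]
      refine lt_of_le_of_lt hsup ?_
      rw [ENNReal.ofReal_lt_ofReal_iff hδ']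
      have := min_le_right r δ'
      linarith
    · left
      intro i j hi hj
      exfalso
      exact hM ⟨i, 0, by simpa using hi.symm⟩
  · -- Case B : p not periodic; show p occurs at most once in any pseudo-orbit
    obtain ⟨δ, hδ, hsh⟩ := h r hr
    obtain ⟨δ₀, hδ₀, hpert⟩ := hX δ hδ
    refine ⟨δ₀, hδ₀, ?_⟩
    intro x hx
    left
    -- main claim: no return to p
    have key : ∀ i j : ℕ, i < j → x i = p → x j = p → False := by
      intro i j hij hxi hxj
      obtain ⟨m, hm1, z, hz0, hzm, hzgap, hzinj⟩ :=
        loop_extract f δ₀ p (j - i) (by omega) (fun t => x (i + t))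
          (by simpa using hxi)
          (by show x (i + (j - i)) = p
              rw [(by omega : i + (j - i) = j)]; exact hxj)
          (fun t ht => by
            have := hx (i + t)
            simpa [Nat.add_assoc] using this)
      -- perturb f along the simple loop
      classical
      set F : Finset X := (Finset.range m).image z with hF
      set g₀ : X → X := fun v =>
        if hv : ∃ t, t < m ∧ z t = v then z (Classical.choose hv + 1) else v with hg₀
      have hzuniq : ∀ t1 t2, t1 < m → t2 < m → z t1 = z t2 → t1 = t2 := by
        intro t1 t2 h1 h2 he
        rcases lt_trichotomy t1 t2 with hc | hc | hc
        · exact absurd he (hzinj t1 t2 hc h2)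
        · exact hc
        · exact absurd he.symm (hzinj t2 t1 hc h1)
      have hg₀z : ∀ t, t < m → g₀ (z t) = z (t + 1) := by
        intro t ht
        have hv : ∃ t', t' < m ∧ z t' = z t := ⟨t, ht, rfl⟩
        simp only [hg₀, dif_pos hv]
        obtain ⟨h1, h2⟩ := Classical.choose_spec hv
        rw [hzuniq _ _ h1 ht h2]
      have hclose : ∀ v ∈ F, dist (g₀ v) (f v) < δ₀ := by
        intro v hv
        simp only [hF, Finset.mem_image, Finset.mem_range] at hv
        obtain ⟨t, ht, rfl⟩ := hv
        rw [hg₀z t ht, dist_comm]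
        exact hzgap t ht
      obtain ⟨g, hgc, hgrho, hgF⟩ := hpert f hf F g₀ hclose
      have hgz : ∀ t, t < m → g (z t) = z (t + 1) := by
        intro t ht
        rw [hgF (z t) (by simp only [hF, Finset.mem_image, Finset.mem_range]; exact ⟨t, ht, rfl⟩)]
        exact hg₀z t ht
      have hit : ∀ t, t ≤ m → g^[t] p = z t := by
        intro t
        induction t with
        | zero => intro _; simpa using hz0.symm
        | succ t iht =>
          intro ht
          rw [Function.iterate_succ_apply', iht (by omega), hgz t (by omega)]
      have hgm : g^[m] p = p := by rw [hit m le_rfl, hzm]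
      obtain ⟨w, hw⟩ := hsh g hgc (by rw [rho_comm] at hgrho ⊢; rwa [rho_comm]) p
      have hw0 : w = p := by
        have := hw 0
        simp only [Function.iterate_zero_apply] at this
        exact hisol w (by rwa [dist_comm] at this)
      have hwm := hw m
      rw [hgm, hw0] at hwm
      have : f^[m] p = p := hisol _ (by rwa [dist_comm] at hwm)
      exact hper ⟨m, hm1, this⟩
    intro i j hi hj
    rcases lt_trichotomy i j with hc | hc | hc
    · exact absurd (key i j hc hi hj) (fun h => h)
    · exact hc
    · exact absurd (key j i hc hj hi) (fun h => h)
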